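/- arXiv:1703.06489 — 6 statements merged into one kernel-verified Lean document; each statement's English description precedes it below -/
import Mathlib

section
/- Let G be a finite group, ω a normalized 3-cocycle on G with values in ℂˣ, and g ∈ G. Then for all x, y in the centralizer C_G(g) = {h ∈ G : hg = gh}, one has γ_g(x,y) = θ_g(x,y). -/
/-- Right conjugation `g^x = x⁻¹ * g * x`. -/
def groupConj {G : Type*} [Group G] (g x : G) : G := x⁻¹ * g * x

/-- `ω : G × G × G → ℂˣ` is a normalized multiplicative 3-cocycle. -/
def IsNormalized3Cocycle {G : Type*} [Group G] (ω : G → G → G → ℂˣ) : Prop :=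
  (∀ a b c d : G, ω b c d * ω a (b * c) d * ω a b c = ω (a * b) c d * ω a b (c * d)) ∧
  (∀ a b c : G, a = 1 ∨ b = 1 ∨ c = 1 → ω a b c = 1)

/-- `θ_g(x,y) = ω(g,x,y)·ω(x,y,g^{xy})·ω(x,g^x,y)⁻¹`. -/
def thetaDPR {G : Type*} [Group G] (ω : G → G → G → ℂˣ) (g x y : G) : ℂˣ :=
  ω g x y * ω x y (groupConj g (x * y)) * (ω x (groupConj g x) y)⁻¹

/-- `γ_x(a,b) = ω(a,b,x)·ω(x,a^x,b^x)·ω(a,x,b^x)⁻¹`. -/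
def gammaDPR {G : Type*} [Group G] (ω : G → G → G → ℂˣ) (x a b : G) : ℂˣ :=
  ω a b x * ω x (groupConj a x) (groupConj b x) * (ω a x (groupConj b x))⁻¹

/- Once all conjugations by elements of the centralizer are trivial, `γ_g(x,y)` and `θ_g(x,y)`
are the same three values of `ω`, multiplied in a different order in the commutative group `ℂˣ`. -/

section Centralizer

variable {G : Type*} [Group G]

theorem groupConj_eq_self_of_commute {g x : G} (h : Commute g x) : groupConj g x = g := by
  rw [groupConj, mul_assoc, h.eq, inv_mul_cancel_left]

variable (ω : G → G → G → ℂˣ) {g x y : G}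

theorem gammaDPR_of_commute (hx : Commute g x) (hy : Commute g y) :
    gammaDPR ω g x y = ω x y g * ω g x y * (ω x g y)⁻¹ := by
  rw [gammaDPR, groupConj_eq_self_of_commute hx.symm, groupConj_eq_self_of_commute hy.symm]

theorem thetaDPR_of_commute (hx : Commute g x) (hy : Commute g y) :
    thetaDPR ω g x y = ω g x y * ω x y g * (ω x g y)⁻¹ := by
  rw [thetaDPR, groupConj_eq_self_of_commute hx, groupConj_eq_self_of_commute (hx.mul_right hy)]

end Centralizer

theorem gamma_eq_theta_on_centralizer_general {G : Type*} [Group G]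
    (ω : G → G → G → ℂˣ) (g : G) :
    ∀ x y : G, x * g = g * x → y * g = g * y →
      gammaDPR ω g x y = thetaDPR ω g x y := by
  intro x y hx hy
  have hgx : Commute g x := Commute.symm hx
  have hgy : Commute g y := Commute.symm hy
  rw [gammaDPR_of_commute ω hgx hgy, thetaDPR_of_commute ω hgx hgy, mul_comm (ω x y g)]

/-- On the centralizer of `g`, the 2-cochains `γ_g` and `θ_g` coincide. -/
theorem gamma_eq_theta_on_centralizer {G : Type*} [Group G] [Finite G]
    (ω : G → G → G → ℂˣ) (hω : IsNormalized3Cocycle ω) (g : G) :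
    ∀ x y : G, x * g = g * x → y * g = g * y →
      gammaDPR ω g x y = thetaDPR ω g x y :=
  gamma_eq_theta_on_centralizer_general ω g
end

section
/- Let G be a finite group and ω a normalized 3-cocycle on G with values in ℂˣ. Then for all g, x, y, z ∈ G one has the twisted 2-cocycle identity θ_g(x,y)·θ_g(xy,z) = θ_{g^x}(y,z)·θ_g(x,yz). (This identity is what makes the multiplication of the twisted quantum double D^ω(G) associative.) -/
/-! Using `g^{xy} = (g^x)^y` and `x · g^x = g · x`, the quotient of the two sides of the identity
is the alternating product of the coboundary `δω` at the four quadruples `(g,x,y,z)`,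
`(x,g^x,y,z)`, `(x,y,g^{xy},z)` and `(x,y,z,g^{xyz})`; it is therefore trivial when `ω` is a
cocycle. -/

section

variable {G : Type*} [Group G]

theorem groupConj_mul (g x y : G) : groupConj g (x * y) = groupConj (groupConj g x) y := by
  simp only [groupConj, mul_inv_rev, mul_assoc]

theorem mul_groupConj (g x : G) : x * groupConj g x = g * x := by
  simp only [groupConj, mul_assoc, mul_inv_cancel_left]

def coboundary3 {M : Type*} [CommGroup M] (ω : G → G → G → M) (a b c d : G) : M :=
  ω b c d * ω a (b * c) d * ω a b c / (ω (a * b) c d * ω a b (c * d))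

theorem IsNormalized3Cocycle.coboundary3_eq_one {ω : G → G → G → ℂˣ} (hω : IsNormalized3Cocycle ω)
    (a b c d : G) : coboundary3 ω a b c d = 1 :=
  div_eq_one.mpr (hω.1 a b c d)

theorem thetaDPR_twisted_coboundary (ω : G → G → G → ℂˣ) (g x y z : G) :
    thetaDPR ω g x y * thetaDPR ω g (x * y) z /
        (thetaDPR ω (groupConj g x) y z * thetaDPR ω g x (y * z)) =
      coboundary3 ω g x y z / coboundary3 ω x (groupConj g x) y z *
        coboundary3 ω x y (groupConj g (x * y)) z / coboundary3 ω x y z (groupConj g (x * y * z)) := by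
  simp only [thetaDPR, coboundary3, groupConj_mul, mul_groupConj, Units.ext_iff]
  push_cast
  field_simp

end

theorem theta_twisted_two_cocycle_general {G : Type*} [Group G]
    (ω : G → G → G → ℂˣ) (hω : IsNormalized3Cocycle ω) :
    ∀ g x y z : G,
      thetaDPR ω g x y * thetaDPR ω g (x * y) z =
        thetaDPR ω (groupConj g x) y z * thetaDPR ω g x (y * z) := by
  intro g x y z
  have h := thetaDPR_twisted_coboundary ω g x y z
  simp only [hω.coboundary3_eq_one, div_one, mul_one] at h
  exact div_eq_one.mp h

/-- The twisted 2-cocycle identity for `θ`, giving associativity of `D^ω(G)`. -/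
theorem theta_twisted_two_cocycle {G : Type*} [Group G] [Finite G]
    (ω : G → G → G → ℂˣ) (hω : IsNormalized3Cocycle ω) :
    ∀ g x y z : G,
      thetaDPR ω g x y * thetaDPR ω g (x * y) z =
        thetaDPR ω (groupConj g x) y z * thetaDPR ω g x (y * z) :=
  theta_twisted_two_cocycle_general ω hω
end

section
/- Let G be a finite group and ω a normalized 3-cocycle on G with values in ℂˣ. Let g, h ∈ Z(G) be central elements such that θ_g, θ_h and θ_{gh} are 2-coboundaries on G, with trivializations τ_g, τ_h, τ_{gh} respectively. Then the function β(g,h) : G → ℂˣ defined by β(g,h)(k) := τ_g(k)·τ_h(k)·τ_{gh}(k)⁻¹·θ_k(g,h) is a group homomorphism from G to ℂˣ, i.e. a character of G. -/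
/-!
For central `g`, `h` all conjugations in the definitions of `θ_g(k, m)`, `θ_h(k, m)`, `θ_{gh}(k, m)`
and `θ_k(g, h)` are trivial, and six instances of the cocycle identity in the letters `g, h, k, m`
show that the coboundary of `k ↦ θ_k(g, h)` is `θ_{gh} / (θ_g θ_h)`. Since `∂τ_x = θ_x`, the coboundary of `β(g,h) = τ_g τ_h τ_{gh}⁻¹ θ_·(g, h)`
is therefore trivial, i.e. `β(g,h)` is multiplicative.
-/

lemma groupConj_of_mem_center_left {G : Type*} [Group G] {g : G} (hg : g ∈ Subgroup.center G)
    (x : G) : groupConj g x = g := by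
  rw [groupConj, mul_assoc, ← Subgroup.mem_center_iff.mp hg x, inv_mul_cancel_left]

lemma groupConj_of_mem_center_right {G : Type*} [Group G] {x : G} (hx : x ∈ Subgroup.center G)
    (g : G) : groupConj g x = g := by
  rw [groupConj, mul_assoc, Subgroup.mem_center_iff.mp hx g, inv_mul_cancel_left]

def mulCoboundary {G A : Type*} [Mul G] [CommGroup A] : (G → A) →* (G → G → A) where
  toFun f x y := f x * f y * (f (x * y))⁻¹
  map_one' := by ext; simp
  map_mul' f₁ f₂ := by ext x y; simp only [Pi.mul_apply, mul_inv]; ac_rfl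

lemma mulCoboundary_apply {G A : Type*} [Mul G] [CommGroup A] (f : G → A) (x y : G) :
    mulCoboundary f x y = f x * f y * (f (x * y))⁻¹ := rfl

lemma mulCoboundary_eq_one_iff {G A : Type*} [Mul G] [CommGroup A] {f : G → A} {x y : G} :
    mulCoboundary f x y = 1 ↔ f (x * y) = f x * f y := by
  rw [mulCoboundary_apply, mul_inv_eq_one, eq_comm]

theorem thetaDPR_mul_of_mem_center {G : Type*} [Group G] (ω : G → G → G → ℂˣ)
    (hω : ∀ a b c d : G, ω b c d * ω a (b * c) d * ω a b c = ω (a * b) c d * ω a b (c * d))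
    {g h : G} (hg : g ∈ Subgroup.center G) (hh : h ∈ Subgroup.center G) (k m : G) :
    thetaDPR ω (g * h) k m =
      thetaDPR ω g k m * thetaDPR ω h k m * mulCoboundary (fun x ↦ thetaDPR ω x g h) k m := by
  have hgh : g * h ∈ Subgroup.center G := Subgroup.mul_mem _ hg hh
  have hc (a b c d : G) := congrArg Additive.ofMul (hω a b c d)
  have hgk := Subgroup.mem_center_iff.mp hg k
  have hgm := Subgroup.mem_center_iff.mp hg m
  have hhk := Subgroup.mem_center_iff.mp hh k
  have hhm := Subgroup.mem_center_iff.mp hh m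
  apply Additive.ofMul.injective
  simp only [mulCoboundary_apply, thetaDPR, groupConj_of_mem_center_left hg,
    groupConj_of_mem_center_left hh, groupConj_of_mem_center_left hgh,
    groupConj_of_mem_center_right hg, groupConj_of_mem_center_right hgh, ofMul_mul, ofMul_inv]
  linear_combination (norm := (simp only [ofMul_mul, hgk, hgm, hhk, hhm]; abel))
    hc g k h m - hc g h k m - hc g k m h - hc k g h m + hc k g m h - hc k m g h

theorem beta_is_character_general {G : Type*} [Group G]
    (ω : G → G → G → ℂˣ) (hω : IsNormalized3Cocycle ω)
    (g h : G) (hg : g ∈ Subgroup.center G) (hh : h ∈ Subgroup.center G)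
    (τg τh τgh : G → ℂˣ)
    (hτg : ∀ x y : G, thetaDPR ω g x y = τg x * τg y * (τg (x * y))⁻¹)
    (hτh : ∀ x y : G, thetaDPR ω h x y = τh x * τh y * (τh (x * y))⁻¹)
    (hτgh : ∀ x y : G, thetaDPR ω (g * h) x y = τgh x * τgh y * (τgh (x * y))⁻¹) :
    ∀ k m : G,
      τg (k * m) * τh (k * m) * (τgh (k * m))⁻¹ * thetaDPR ω (k * m) g h =
        (τg k * τh k * (τgh k)⁻¹ * thetaDPR ω k g h) *
          (τg m * τh m * (τgh m)⁻¹ * thetaDPR ω m g h) := by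
  intro k m
  suffices mulCoboundary (τg * τh * τgh⁻¹ * fun x ↦ thetaDPR ω x g h) k m = 1 from
    mulCoboundary_eq_one_iff.mp this
  calc mulCoboundary (τg * τh * τgh⁻¹ * fun x ↦ thetaDPR ω x g h) k m
      = thetaDPR ω g k m * thetaDPR ω h k m * (thetaDPR ω (g * h) k m)⁻¹ *
          mulCoboundary (fun x ↦ thetaDPR ω x g h) k m := by
        simp only [map_mul, map_inv, Pi.mul_apply, Pi.inv_apply, mulCoboundary_apply τg,
          mulCoboundary_apply τh, mulCoboundary_apply τgh, hτg, hτh, hτgh]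
    _ = 1 := by
        rw [mul_right_comm, ← thetaDPR_mul_of_mem_center ω hω.1 hg hh, mul_inv_cancel]

/-- For central `g, h` with `θ_g, θ_h, θ_{gh}` coboundaries,
`β(g,h)(k) = τ_g(k)τ_h(k)τ_{gh}(k)⁻¹θ_k(g,h)` is a character of `G`. -/
theorem beta_is_character {G : Type*} [Group G] [Finite G]
    (ω : G → G → G → ℂˣ) (hω : IsNormalized3Cocycle ω)
    (g h : G) (hg : g ∈ Subgroup.center G) (hh : h ∈ Subgroup.center G)
    (τg τh τgh : G → ℂˣ)
    (hτg : ∀ x y : G, thetaDPR ω g x y = τg x * τg y * (τg (x * y))⁻¹)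
    (hτh : ∀ x y : G, thetaDPR ω h x y = τh x * τh y * (τh (x * y))⁻¹)
    (hτgh : ∀ x y : G, thetaDPR ω (g * h) x y = τgh x * τgh y * (τgh (x * y))⁻¹) :
    ∀ k m : G,
      τg (k * m) * τh (k * m) * (τgh (k * m))⁻¹ * thetaDPR ω (k * m) g h =
        (τg k * τh k * (τgh k)⁻¹ * thetaDPR ω k g h) *
          (τg m * τh m * (τgh m)⁻¹ * thetaDPR ω m g h) :=
  beta_is_character_general ω hω g h hg hh τg τh τgh hτg hτh hτgh
end

section
/- Let G be a finite group, ω a normalized 3-cocycle on G with values in ℂˣ, and A a subgroup of the center Z(G) such that for every a ∈ A the 2-cocycle θ_a is a 2-coboundary on G, with a chosen trivialization τ_a for each a ∈ A. Define β(a,b)(k) := τ_a(k)·τ_b(k)·τ_{ab}(k)⁻¹·θ_k(a,b). Suppose ν assigns to each a ∈ A a group homomorphism ν(a) : G → ℂˣ such that β(a,b)(k) = ν(a)(k)·ν(b)(k)·ν(ab)(k)⁻¹ for all a, b ∈ A and k ∈ G. Then the function (a∣b)_ν := τ_a(b)·τ_b(a)·(ν(a)(b)·ν(b)(a))⁻¹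 is a symmetric bicharacter on A: for all a, b, c ∈ A one has (a∣b)_ν = (b∣a)_ν and (ab∣c)_ν = (a∣c)_ν·(b∣c)_ν. -/
/-!
The pairing is visibly symmetric. For multiplicativity in the first variable, expand
`(ab∣c)` using the trivialization of `θ_c`, `τ_c(ab) = τ_c(a)τ_c(b)θ_c(a,b)⁻¹`, the defining
relation of `ν`, `ν(ab)(c) = ν(a)(c)ν(b)(c)β(a,b)(c)⁻¹`, and multiplicativity of `ν(c)`:
the factor `θ_c(a,b)` contributed by `τ_c(ab)` cancels against the one inside `β(a,b)(c)`,
leaving `(a∣c)(b∣c)`.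
-/

section Pairing

variable {G M : Type*} [MulOneClass G] [CommGroup M]

def pairing (τ : G → G → M) (ν : G → G →* M) (a b : G) : M :=
  τ a b * τ b a * (ν a b * ν b a)⁻¹

theorem pairing_comm (τ : G → G → M) (ν : G → G →* M) (a b : G) :
    pairing τ ν a b = pairing τ ν b a := by
  rw [pairing, pairing, mul_comm (τ a b), mul_comm (ν a b)]

theorem pairing_mul_left {τ : G → G → M} {ν : G → G →* M} {θ : G → G → G → M} {a b c : G}
    (hτ : θ c a b = τ c a * τ c b * (τ c (a * b))⁻¹)
    (hν : τ a c * τ b c * (τ (a * b) c)⁻¹ * θ c a b = ν a c * ν b c * (ν (a * b) c)⁻¹) :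
    pairing τ ν (a * b) c = pairing τ ν a c * pairing τ ν b c := by
  have hτc : τ c (a * b) = τ c a * τ c b * (θ c a b)⁻¹ := by
    rw [hτ, mul_inv_rev, inv_inv, mul_inv_cancel_comm_assoc]
  have hνc : ν (a * b) c = ν a c * ν b c * (τ a c * τ b c * (τ (a * b) c)⁻¹ * θ c a b)⁻¹ := by
    rw [hν, mul_inv_rev, inv_inv, mul_inv_cancel_comm_assoc]
  rw [pairing, pairing, pairing, hτc, hνc, map_mul]
  apply Additive.ofMul.injective
  simp only [ofMul_mul, ofMul_inv]
  abel

end Pairing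

theorem pairing_is_symmetric_bicharacter_general {G : Type*} [Group G]
    (ω : G → G → G → ℂˣ)
    (A : Subgroup G)
    (τ : G → G → ℂˣ)
    (hτ : ∀ a ∈ A, ∀ x y : G, thetaDPR ω a x y = τ a x * τ a y * (τ a (x * y))⁻¹)
    (ν : G → G →* ℂˣ)
    (hν : ∀ a ∈ A, ∀ b ∈ A, ∀ m : G,
      τ a m * τ b m * (τ (a * b) m)⁻¹ * thetaDPR ω m a b =
        ν a m * ν b m * (ν (a * b) m)⁻¹) :
    (∀ a ∈ A, ∀ b ∈ A,
      τ a b * τ b a * (ν a b * ν b a)⁻¹ = τ b a * τ a b * (ν b a * ν a b)⁻¹) ∧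
    (∀ a ∈ A, ∀ b ∈ A, ∀ c ∈ A,
      τ (a * b) c * τ c (a * b) * (ν (a * b) c * ν c (a * b))⁻¹ =
        (τ a c * τ c a * (ν a c * ν c a)⁻¹) *
          (τ b c * τ c b * (ν b c * ν c b)⁻¹)) :=
  ⟨fun a _ b _ => pairing_comm τ ν a b,
    fun a ha b hb c hc => pairing_mul_left (hτ c hc a b) (hν a ha b hb c)⟩

/-- The pairing `(a∣b)_ν = τ_a(b)τ_b(a)(ν(a)(b)ν(b)(a))⁻¹` is a symmetric
bicharacter on the central subgroup `A`. -/
theorem pairing_is_symmetric_bicharacter {G : Type*} [Group G] [Finite G]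
    (ω : G → G → G → ℂˣ) (hω : IsNormalized3Cocycle ω)
    (A : Subgroup G) (hA : A ≤ Subgroup.center G)
    (τ : G → G → ℂˣ)
    (hτ : ∀ a ∈ A, ∀ x y : G, thetaDPR ω a x y = τ a x * τ a y * (τ a (x * y))⁻¹)
    (ν : G → G →* ℂˣ)
    (hν : ∀ a ∈ A, ∀ b ∈ A, ∀ m : G,
      τ a m * τ b m * (τ (a * b) m)⁻¹ * thetaDPR ω m a b =
        ν a m * ν b m * (ν (a * b) m)⁻¹) :
    (∀ a ∈ A, ∀ b ∈ A,
      τ a b * τ b a * (ν a b * ν b a)⁻¹ = τ b a * τ a b * (ν b a * ν a b)⁻¹) ∧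
    (∀ a ∈ A, ∀ b ∈ A, ∀ c ∈ A,
      τ (a * b) c * τ c (a * b) * (ν (a * b) c * ν c (a * b))⁻¹ =
        (τ a c * τ c a * (ν a c * ν c a)⁻¹) *
          (τ b c * τ c b * (ν b c * ν c b)⁻¹)) :=
  pairing_is_symmetric_bicharacter_general ω A τ hτ ν hν
end

section
/- With the lattice data (M, L, B, c₀, s) as in the context, the function ω on A := M/L defined by ω(a,b,c) := (−1)^{B(s(c), d(a,b))}·c₀(s(c), d(a,b)), where d(a,b) := s(a) + s(b) − s(a+b) ∈ L, is a normalized 3-cocycle on the abelian group A: ω(b,c,e)·ω(a,b+c,e)·ω(a,b,c) = ω(a+b,c,e)·ω(a,b,c+e) for all a,b,c,e ∈ A, and ω(a,b,c) = 1 whenever any of a, b, c equals 0. -/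
/-!
`d(a,b) = s(a) + s(b) - s(a+b)` is an `L`-valued 2-cocycle of `A = M/L`, and on `M × L` the
twisted pairing `f(x, α) = (-1)^{B(x,α)} c₀(x,α)` is bimultiplicative and trivial on `L × L`.
Since `ω(a,b,c) = f(s c, d(a,b))`, the cocycle identity for `ω` splits into the 2-cocycle identity
for `d` (multiplicativity of `f` in the second variable) and `f(s(c+e), α) = f(s c, α) f(s e, α)`,
which holds because `s c + s e - s(c+e) = d(c,e) ∈ L` pairs trivially with `α ∈ L`.
-/

section SectionDefect

variable {A M : Type*} [AddCommGroup A] [AddCommGroup M]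

def sectionDefect (s : A → M) (a b : A) : M := s a + s b - s (a + b)

theorem sectionDefect_add_sectionDefect (s : A → M) (a b c : A) :
    sectionDefect s b c + sectionDefect s a (b + c) =
      sectionDefect s (a + b) c + sectionDefect s a b := by
  simp only [sectionDefect, add_assoc]
  abel

theorem add_eq_add_sectionDefect (s : A → M) (a b : A) :
    s a + s b = s (a + b) + sectionDefect s a b := by
  simp [sectionDefect]

theorem sectionDefect_zero_left {s : A → M} (hs0 : s 0 = 0) (b : A) :
    sectionDefect s 0 b = 0 := by
  simp [sectionDefect, hs0]

theorem sectionDefect_zero_right {s : A → M} (hs0 : s 0 = 0) (a : A) :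
    sectionDefect s a 0 = 0 := by
  simp [sectionDefect, hs0]

theorem sectionDefect_mem {L : AddSubgroup M} {s : M ⧸ L → M}
    (hs : ∀ a : M ⧸ L, ((s a : M) : M ⧸ L) = a) (a b : M ⧸ L) : sectionDefect s a b ∈ L := by
  rw [← QuotientAddGroup.eq_zero_iff]
  simp [sectionDefect, hs]

end SectionDefect

section PairingCocycle

variable {A M G : Type*} [AddCommGroup A] [AddCommGroup M] [CommGroup G]
  {L : AddSubgroup M} {f : M → M → G}

theorem pairing_sectionDefect_cocycle {s : A → M} (hd : ∀ a b, sectionDefect s a b ∈ L)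
    (hf₁ : ∀ x y, ∀ α ∈ L, f (x + y) α = f x α * f y α)
    (hf₂ : ∀ x, ∀ α ∈ L, ∀ β ∈ L, f x (α + β) = f x α * f x β)
    (hfL : ∀ α ∈ L, ∀ β ∈ L, f α β = 1) (a b c e : A) :
    f (s e) (sectionDefect s b c) * f (s e) (sectionDefect s a (b + c)) *
        f (s c) (sectionDefect s a b) =
      f (s e) (sectionDefect s (a + b) c) * f (s (c + e)) (sectionDefect s a b) := by
  have hdefect : f (s e) (sectionDefect s b c) * f (s e) (sectionDefect s a (b + c)) =
      f (s e) (sectionDefect s (a + b) c) * f (s e) (sectionDefect s a b) := by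
    rw [← hf₂ _ _ (hd b c) _ (hd a (b + c)), sectionDefect_add_sectionDefect,
      hf₂ _ _ (hd (a + b) c) _ (hd a b)]
  have hsection : f (s (c + e)) (sectionDefect s a b) =
      f (s c) (sectionDefect s a b) * f (s e) (sectionDefect s a b) := by
    calc f (s (c + e)) (sectionDefect s a b)
        = f (s (c + e)) (sectionDefect s a b) * f (sectionDefect s c e) (sectionDefect s a b) := by
          rw [hfL _ (hd c e) _ (hd a b), mul_one]
      _ = f (s c + s e) (sectionDefect s a b) := by
          rw [← hf₁ _ _ _ (hd a b), add_eq_add_sectionDefect]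
      _ = f (s c) (sectionDefect s a b) * f (s e) (sectionDefect s a b) := hf₁ _ _ _ (hd a b)
  rw [hdefect, hsection]
  ac_rfl

theorem pairing_sectionDefect_eq_one {s : A → M} (hs0 : s 0 = 0)
    (hd : ∀ a b, sectionDefect s a b ∈ L)
    (hf₁ : ∀ x y, ∀ α ∈ L, f (x + y) α = f x α * f y α)
    (hf₂ : ∀ x, ∀ α ∈ L, ∀ β ∈ L, f x (α + β) = f x α * f x β) {a b c : A}
    (h : a = 0 ∨ b = 0 ∨ c = 0) : f (s c) (sectionDefect s a b) = 1 := by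
  have hf_zero_right : ∀ x, f x 0 = 1 := fun x =>
    mul_eq_right.mp (by rw [← hf₂ x 0 L.zero_mem 0 L.zero_mem, add_zero])
  rcases h with rfl | rfl | rfl
  · rw [sectionDefect_zero_left hs0, hf_zero_right]
  · rw [sectionDefect_zero_right hs0, hf_zero_right]
  · rw [hs0]
    exact mul_eq_right.mp (by rw [← hf₁ 0 0 _ (hd a b), add_zero])

end PairingCocycle

section SignTwistedPairing

variable {M G : Type*} [AddCommGroup M] [CommGroup G] [HasDistribNeg G]
  {L : AddSubgroup M} {B : M → M → ℚ} {c₀ : M → M → G}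

/-- Only the values on `M × L` matter; there `B` is integral and the floor is harmless. -/
def signTwistedPairing (B : M → M → ℚ) (c₀ : M → M → G) (x α : M) : G :=
  (-1) ^ ⌊B x α⌋ * c₀ x α

variable (hBint : ∀ x : M, ∀ α ∈ L, ∃ n : ℤ, B x α = (n : ℚ))
include hBint

theorem intCast_floor_pairing (x : M) {α : M} (hα : α ∈ L) : (⌊B x α⌋ : ℚ) = B x α := by
  obtain ⟨n, hn⟩ := hBint x α hα
  rw [hn, Int.floor_intCast]

theorem signTwistedPairing_add_left (hBadd₁ : ∀ x y z : M, B (x + y) z = B x z + B y z)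
    (hc₀add₁ : ∀ x y z : M, c₀ (x + y) z = c₀ x z * c₀ y z) (x y α : M) (hα : α ∈ L) :
    signTwistedPairing B c₀ (x + y) α =
      signTwistedPairing B c₀ x α * signTwistedPairing B c₀ y α := by
  obtain ⟨n, hn⟩ := hBint y α hα
  simp only [signTwistedPairing, hBadd₁, hc₀add₁, hn, Int.floor_add_intCast, Int.floor_intCast,
    zpow_add]
  exact mul_mul_mul_comm _ _ _ _

theorem signTwistedPairing_add_right (hBadd₂ : ∀ x y z : M, B x (y + z) = B x y + B x z)
    (hc₀add₂ : ∀ x y z : M, c₀ x (y + z) = c₀ x y * c₀ x z) (x α β : M) (hβ : β ∈ L) :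
    signTwistedPairing B c₀ x (α + β) =
      signTwistedPairing B c₀ x α * signTwistedPairing B c₀ x β := by
  obtain ⟨n, hn⟩ := hBint x β hβ
  simp only [signTwistedPairing, hBadd₂, hc₀add₂, hn, Int.floor_add_intCast, Int.floor_intCast,
    zpow_add]
  exact mul_mul_mul_comm _ _ _ _

theorem signTwistedPairing_eq_one
    (hc₀L : ∀ α ∈ L, ∀ β ∈ L, ∀ n : ℤ, (n : ℚ) = B α β → c₀ α β = (-1 : G) ^ n)
    {α β : M} (hα : α ∈ L) (hβ : β ∈ L) : signTwistedPairing B c₀ α β = 1 := by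
  rw [signTwistedPairing, hc₀L α hα β hβ _ (intCast_floor_pairing hBint α hβ), ← zpow_add]
  exact Even.neg_one_zpow ⟨_, rfl⟩

end SignTwistedPairing

theorem lattice_omega_is_normalized_three_cocycle_general
    {M : Type*} [AddCommGroup M] (L : AddSubgroup M)
    (B : M → M → ℚ)
    (hBadd₁ : ∀ x y z : M, B (x + y) z = B x z + B y z)
    (hBadd₂ : ∀ x y z : M, B x (y + z) = B x y + B x z)
    (hBint : ∀ x : M, ∀ α ∈ L, ∃ n : ℤ, B x α = (n : ℚ))
    (c₀ : M → M → ℂˣ)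
    (hc₀add₁ : ∀ x y z : M, c₀ (x + y) z = c₀ x z * c₀ y z)
    (hc₀add₂ : ∀ x y z : M, c₀ x (y + z) = c₀ x y * c₀ x z)
    (hc₀L : ∀ α ∈ L, ∀ β ∈ L, ∀ n : ℤ, (n : ℚ) = B α β → c₀ α β = (-1 : ℂˣ) ^ n)
    (s : M ⧸ L → M)
    (hs : ∀ a : M ⧸ L, ((s a : M) : M ⧸ L) = a)
    (hs0 : s 0 = 0)
    (ω : (M ⧸ L) → (M ⧸ L) → (M ⧸ L) → ℂˣ)
    (hω : ∀ a b c : M ⧸ L, ∀ n : ℤ,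
      (n : ℚ) = B (s c) (s a + s b - s (a + b)) →
      ω a b c = (-1 : ℂˣ) ^ n * c₀ (s c) (s a + s b - s (a + b))) :
    (∀ a b c e : M ⧸ L,
      ω b c e * ω a (b + c) e * ω a b c = ω (a + b) c e * ω a b (c + e)) ∧
    (∀ a b c : M ⧸ L, a = 0 ∨ b = 0 ∨ c = 0 → ω a b c = 1) := by
  have hd := sectionDefect_mem hs
  have hω_eq : ∀ a b c, ω a b c = signTwistedPairing B c₀ (s c) (sectionDefect s a b) :=
    fun a b c => hω a b c _ (intCast_floor_pairing hBint _ (hd a b))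
  have hf₁ := signTwistedPairing_add_left hBint hBadd₁ hc₀add₁
  have hf₂ : ∀ x, ∀ α ∈ L, ∀ β ∈ L, _ := fun x α _ β hβ =>
    signTwistedPairing_add_right hBint hBadd₂ hc₀add₂ x α β hβ
  simp only [hω_eq]
  exact ⟨pairing_sectionDefect_cocycle hd hf₁ hf₂
      (fun α hα β hβ => signTwistedPairing_eq_one hBint hc₀L hα hβ),
    fun a b c h => pairing_sectionDefect_eq_one hs0 hd hf₁ hf₂ h⟩

/-- For an even lattice `L` inside `M` (playing the role of the dual lattice `L*`),
with alternating bicharacter `c₀` restricting to `(-1)^{B(·,·)}` on `L` and a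
normalized section `s` of `M → M/L`, the function
`ω(a,b,c) = (-1)^{B(s(c), d(a,b))}·c₀(s(c), d(a,b))` with `d(a,b) = s(a)+s(b)-s(a+b)`
is a normalized 3-cocycle on `A = M/L`. -/
theorem lattice_omega_is_normalized_three_cocycle
    {M : Type*} [AddCommGroup M] (L : AddSubgroup M)
    (B : M → M → ℚ)
    (hBsymm : ∀ x y : M, B x y = B y x)
    (hBadd₁ : ∀ x y z : M, B (x + y) z = B x z + B y z)
    (hBadd₂ : ∀ x y z : M, B x (y + z) = B x y + B x z)
    (hBint : ∀ x : M, ∀ α ∈ L, ∃ n : ℤ, B x α = (n : ℚ))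
    (hBeven : ∀ α ∈ L, ∃ n : ℤ, B α α = 2 * (n : ℚ))
    (c₀ : M → M → ℂˣ)
    (hc₀add₁ : ∀ x y z : M, c₀ (x + y) z = c₀ x z * c₀ y z)
    (hc₀add₂ : ∀ x y z : M, c₀ x (y + z) = c₀ x y * c₀ x z)
    (hc₀alt : ∀ x : M, c₀ x x = 1)
    (hc₀L : ∀ α ∈ L, ∀ β ∈ L, ∀ n : ℤ, (n : ℚ) = B α β → c₀ α β = (-1 : ℂˣ) ^ n)
    (s : M ⧸ L → M)
    (hs : ∀ a : M ⧸ L, ((s a : M) : M ⧸ L) = a)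
    (hs0 : s 0 = 0)
    (ω : (M ⧸ L) → (M ⧸ L) → (M ⧸ L) → ℂˣ)
    (hω : ∀ a b c : M ⧸ L, ∀ n : ℤ,
      (n : ℚ) = B (s c) (s a + s b - s (a + b)) →
      ω a b c = (-1 : ℂˣ) ^ n * c₀ (s c) (s a + s b - s (a + b))) :
    (∀ a b c e : M ⧸ L,
      ω b c e * ω a (b + c) e * ω a b c = ω (a + b) c e * ω a b (c + e)) ∧
    (∀ a b c : M ⧸ L, a = 0 ∨ b = 0 ∨ c = 0 → ω a b c = 1) :=
  lattice_omega_is_normalized_three_cocycle_general L B hBadd₁ hBadd₂ hBint c₀ hc₀add₁ hc₀add₂ hc₀L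
    s hs hs0 ω hω
end

section
/- Let G be a finite subgroup of SU(2, ℂ) of even order. Then G contains the matrix −I (the negative of the identity matrix), −I is the unique element of order 2 in G, and hence {I, −I} is the unique subgroup of G of order 2. -/
/-!
An involution `A` of determinant one is its own inverse, i.e. its own adjugate; in dimension two
the adjugate of `!![a, b; c, d]` is `!![d, -b; -c, a]`, so away from characteristic two
`A = a • 1` with `a ^ 2 = 1`. Hence `-I` is the only element of order two in `SU(2)`. By Cauchy's
theorem a finite subgroup of even order has an element of order two, which must be `-I`, and a
subgroup of order two is generated by its element of order two.
-/

/-- The group structure on `Matrix.specialUnitaryGroup (Fin 2) ℂ`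
(inverse given by star-transpose). -/
noncomputable instance : Group (Matrix.specialUnitaryGroup (Fin 2) ℂ) :=
  { (inferInstance : Monoid (Matrix.specialUnitaryGroup (Fin 2) ℂ)) with
    inv := fun A => ⟨star A.1, by
      have hA := A.2
      rw [Matrix.mem_specialUnitaryGroup_iff] at hA ⊢
      refine ⟨Unitary.star_mem hA.1, ?_⟩
      have hdet : (A.1).det = 1 := hA.2
      simp [MonoidHom.mem_mker, Matrix.star_eq_conjTranspose,
        Matrix.det_conjTranspose, hdet]⟩
    inv_mul_cancel := fun A => Subtype.ext (Submonoid.mem_inf.mp A.2).1.1 }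

namespace Matrix

variable {n R : Type*} [Fintype n] [DecidableEq n]

theorem adjugate_eq_self_of_mul_self_eq_one [CommRing R] {A : Matrix n n R}
    (hsq : A * A = 1) (hdet : A.det = 1) : A.adjugate = A :=
  calc A.adjugate = A.adjugate * (A * A) := by rw [hsq, Matrix.mul_one]
    _ = A := by rw [← Matrix.mul_assoc, adjugate_mul, hdet, one_smul, Matrix.one_mul]

theorem eq_one_or_eq_neg_one_of_mul_self_eq_one_of_det_eq_one [CommRing R] [IsDomain R]
    (hR : ringChar R ≠ 2) {A : Matrix (Fin 2) (Fin 2) R} (hsq : A * A = 1) (hdet : A.det = 1) :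
    A = 1 ∨ A = -1 := by
  have hadj := adjugate_eq_self_of_mul_self_eq_one hsq hdet
  rw [adjugate_fin_two] at hadj
  have h01 : A 0 1 = 0 :=
    (Ring.eq_self_iff_eq_zero_of_char_ne_two hR).mp (congrFun (congrFun hadj 0) 1)
  have h10 : A 1 0 = 0 :=
    (Ring.eq_self_iff_eq_zero_of_char_ne_two hR).mp (congrFun (congrFun hadj 1) 0)
  have h11 : A 1 1 = A 0 0 := by simpa using congrFun (congrFun hadj 0) 0
  have hsq00 : A 0 0 * A 0 0 = 1 := by simpa [det_fin_two, h01, h10, h11] using hdet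
  rw [eta_fin_two A, h01, h10, h11, one_fin_two]
  rcases mul_self_eq_one_iff.mp hsq00 with h | h <;> simp [h]

variable [CommRing R] [StarRing R]

theorem neg_one_mem_specialUnitaryGroup (hn : Even (Fintype.card n)) :
    (-1 : Matrix n n R) ∈ specialUnitaryGroup n R :=
  ⟨by simp [mem_unitaryGroup_iff], by simp [det_neg, hn.neg_one_pow]⟩

def specialUnitaryGroup.negOne : specialUnitaryGroup (Fin 2) R :=
  ⟨-1, neg_one_mem_specialUnitaryGroup (by simp)⟩

theorem specialUnitaryGroup.orderOf_eq_two_iff [IsDomain R] (hR : ringChar R ≠ 2)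
    (g : specialUnitaryGroup (Fin 2) R) : orderOf g = 2 ↔ g = negOne := by
  have : Fact (Nat.Prime 2) := ⟨Nat.prime_two⟩
  have negOne_ne_one : (negOne : specialUnitaryGroup (Fin 2) R) ≠ 1 := fun h =>
    Ring.neg_one_ne_one_of_char_ne_two hR
      (by simpa [negOne] using congrFun (congrFun (congrArg Subtype.val h) 0) 0)
  rw [orderOf_eq_prime_iff]
  constructor
  · rintro ⟨hsq, hne⟩
    have hsq' : (g : Matrix (Fin 2) (Fin 2) R) * g = 1 := by
      simpa [sq] using congrArg Subtype.val hsq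
    rcases eq_one_or_eq_neg_one_of_mul_self_eq_one_of_det_eq_one hR hsq' g.2.2 with h | h
    · exact absurd (Subtype.ext h) hne
    · exact Subtype.ext h
  · rintro rfl
    exact ⟨Subtype.ext (by simp [negOne, sq]), negOne_ne_one⟩

end Matrix

namespace Subgroup

variable {M : Type*} [Group M] {z : M}

theorem eq_one_or_eq_of_card_eq_two (hz : ∀ g : M, orderOf g = 2 → g = z) {H : Subgroup M}
    (hH : Nat.card H = 2) {h : M} (hh : h ∈ H) : h = 1 ∨ h = z := by
  have hdvd : orderOf h ∣ 2 := hH ▸ Subgroup.orderOf_dvd_natCard H hh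
  rcases (Nat.dvd_prime Nat.prime_two).mp hdvd with h1 | h2
  · exact .inl (orderOf_eq_one_iff.mp h1)
  · exact .inr (hz h h2)

theorem mem_of_even_card (hz : ∀ g : M, orderOf g = 2 → g = z) {G : Subgroup M} [Finite G]
    (heven : Even (Nat.card G)) : z ∈ G := by
  have : Fact (Nat.Prime 2) := ⟨Nat.prime_two⟩
  obtain ⟨x, hx⟩ := exists_prime_orderOf_dvd_card' (G := G) 2 heven.two_dvd
  rw [← hz x (by rwa [Subgroup.orderOf_coe])]
  exact x.2

theorem eq_zpowers_of_card_eq_two (hz : ∀ g : M, orderOf g = 2 ↔ g = z) {H : Subgroup M}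
    (hH : Nat.card H = 2) : H = zpowers z := by
  have : Finite H := Nat.finite_of_card_ne_zero (by rw [hH]; norm_num)
  have hzH : z ∈ H := mem_of_even_card (fun g => (hz g).mp) (by rw [hH]; exact even_two)
  refine (eq_of_le_of_card_ge (zpowers_le.mpr hzH) ?_).symm
  rw [hH, Nat.card_zpowers, (hz z).mpr rfl]

end Subgroup

/-- A finite subgroup `G ≤ SU(2,ℂ)` of even order contains `-I`, `-I` is its
unique element of order 2, and `{I, -I}` is its unique subgroup of order 2. -/
theorem neg_one_unique_involution_in_even_order_SU2_subgroup
    (G : Subgroup (Matrix.specialUnitaryGroup (Fin 2) ℂ)) [Finite G]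
    (heven : Even (Nat.card G)) :
    (∃ g ∈ G, (g : Matrix (Fin 2) (Fin 2) ℂ) = -1) ∧
    (∀ g ∈ G, ((g : Matrix (Fin 2) (Fin 2) ℂ) = -1 ↔ orderOf g = 2)) ∧
    (∃! H : Subgroup (Matrix.specialUnitaryGroup (Fin 2) ℂ),
      H ≤ G ∧ Nat.card H = 2) ∧
    (∀ H : Subgroup (Matrix.specialUnitaryGroup (Fin 2) ℂ),
      H ≤ G → Nat.card H = 2 →
      ∀ h ∈ H, (h : Matrix (Fin 2) (Fin 2) ℂ) = 1 ∨
        (h : Matrix (Fin 2) (Fin 2) ℂ) = -1) := by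
  have hz := Matrix.specialUnitaryGroup.orderOf_eq_two_iff (R := ℂ) (by simp [ringChar.eq_zero])
  have hzG : Matrix.specialUnitaryGroup.negOne ∈ G :=
    Subgroup.mem_of_even_card (fun g => (hz g).mp) heven
  refine ⟨⟨_, hzG, rfl⟩, fun g _ => Subtype.ext_iff.symm.trans (hz g).symm, ?_, ?_⟩
  · refine ⟨Subgroup.zpowers Matrix.specialUnitaryGroup.negOne,
      ⟨Subgroup.zpowers_le.mpr hzG, by rw [Nat.card_zpowers, (hz _).mpr rfl]⟩, ?_⟩
    rintro H ⟨-, hH⟩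
    exact Subgroup.eq_zpowers_of_card_eq_two hz hH
  · intro H _ hH h hh
    rcases Subgroup.eq_one_or_eq_of_card_eq_two (fun g => (hz g).mp) hH hh with rfl | rfl
    exacts [.inl rfl, .inr rfl]
end
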